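/- Let T, X > 0, let g : [0,T] → ℝ and h : [0,X] → ℝ be continuous, let c ∈ ℝ, and let f(y) = ∑_{n≥0} yⁿ/(n!)². Define m : [0,T] × [0,X] → ℝ by m(t,x) = c · f( (∫₀ᵗ g(s) ds) · (∫₀ˣ h(a) da) ). Then m solves the two-parameter linear Volterra integral equation m(t,x) = c + ∫₀ᵗ ∫₀ˣ g(s) h(a) m(s,a) da ds for all (t,x) ∈ [0,T] × [0,X]. -/

import Mathlib

open Set


lemma aux_summable (C : ℕ → ℝ) (hC : ∀ n, |C n| ≤ 1 / n.factorial) (y : ℝ) :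
    Summable fun n : ℕ => C n * y ^ n := by
  apply Summable.of_norm_bounded (Real.summable_pow_div_factorial |y|)
  intro n
  have h1 : (0:ℝ) < n.factorial := by positivity
  rw [norm_mul, norm_pow, Real.norm_eq_abs, Real.norm_eq_abs]
  calc |C n| * |y| ^ n ≤ (1 / n.factorial) * |y| ^ n := by
        gcongr; exact hC n
    _ = |y| ^ n / n.factorial := by ring

lemma aux_hasDerivAt (C : ℕ → ℝ) (hC : ∀ n, |C n| ≤ 1 / n.factorial) (y : ℝ) :
    HasDerivAt (fun z : ℝ => ∑' n : ℕ, C n * z ^ n)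
      (∑' n : ℕ, ((n : ℝ) + 1) * C (n + 1) * y ^ n) y := by
  set R : ℝ := |y| + 1 with hR
  have hR1 : (1:ℝ) ≤ R := le_add_of_nonneg_left (abs_nonneg y)
  have hR0 : (0:ℝ) < R := lt_of_lt_of_le one_pos hR1
  have hu : Summable fun n : ℕ => (2 * R) ^ n / n.factorial :=
    Real.summable_pow_div_factorial _
  have hyball : y ∈ Metric.ball (0:ℝ) R := by
    simp [Real.dist_eq, hR]
  have hbound : ∀ (n : ℕ) (z : ℝ), z ∈ Metric.ball (0:ℝ) R →
      ‖C n * ((n : ℝ) * z ^ (n - 1))‖ ≤ (2 * R) ^ n / n.factorial := by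
    intro n z hz
    have hzR : |z| ≤ R := by
      have := Metric.mem_ball.mp hz
      rw [Real.dist_eq, sub_zero] at this
      exact this.le
    have h1 : (0:ℝ) < n.factorial := by positivity
    rw [norm_mul, norm_mul, Real.norm_eq_abs, Real.norm_eq_abs, Real.norm_eq_abs, abs_pow]
    have hn2 : (n : ℝ) ≤ 2 ^ n := by
      exact_mod_cast (@Nat.lt_two_pow_self n).le
    have hzn : |z| ^ (n-1) ≤ R ^ n := by
      calc |z| ^ (n-1) ≤ R ^ (n-1) := by
            gcongr
        _ ≤ R ^ n := pow_le_pow_right₀ hR1 (Nat.sub_le n 1)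
    calc |C n| * (|(n:ℝ)| * |z| ^ (n-1)) ≤ (1 / n.factorial) * ((2:ℝ)^n * R ^ n) := by
          have : |(n:ℝ)| = (n:ℝ) := abs_of_nonneg (by positivity)
          rw [this]
          apply mul_le_mul (hC n) ?_ (by positivity) (by positivity)
          exact mul_le_mul hn2 hzn (by positivity) (by positivity)
      _ = (2 * R) ^ n / n.factorial := by rw [mul_pow]; ring
  have hderiv : HasDerivAt (fun z : ℝ => ∑' n : ℕ, C n * z ^ n)
      (∑' n : ℕ, C n * ((n : ℝ) * y ^ (n - 1))) y := by
    refine hasDerivAt_tsum_of_isPreconnected hu Metric.isOpen_ball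
      (convex_ball (0:ℝ) R).isPreconnected
      (fun n z _ => (hasDerivAt_pow n z).const_mul (C n)) hbound hyball
      (aux_summable C hC y) hyball
  have hsum : Summable fun n : ℕ => C n * ((n : ℝ) * y ^ (n - 1)) :=
    Summable.of_norm_bounded hu (fun n => hbound n y hyball)
  have hre : ∑' n : ℕ, C n * ((n : ℝ) * y ^ (n - 1))
      = ∑' n : ℕ, ((n : ℝ) + 1) * C (n + 1) * y ^ n := by
    rw [Summable.tsum_eq_zero_add hsum]
    simp only [Nat.cast_zero, zero_mul, mul_zero, zero_add]
    apply tsum_congr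
    intro n
    simp only [Nat.add_sub_cancel]
    push_cast
    ring
  rw [← hre]
  exact hderiv


noncomputable def vC0 (n : ℕ) : ℝ := 1 / (n.factorial : ℝ) ^ 2
noncomputable def vC1 (n : ℕ) : ℝ := 1 / ((n.factorial : ℝ) * ((n+1).factorial : ℝ))
noncomputable def vCp (n : ℕ) : ℝ := (n : ℝ) / (n.factorial : ℝ) ^ 2

lemma fact_pos (n : ℕ) : (0:ℝ) < (n.factorial : ℝ) := by positivity
lemma fact_one_le (n : ℕ) : (1:ℝ) ≤ (n.factorial : ℝ) := by
  exact_mod_cast n.factorial_pos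

lemma hvC0 (n : ℕ) : |vC0 n| ≤ 1 / n.factorial := by
  rw [vC0, abs_of_nonneg (by positivity)]
  rw [div_le_div_iff₀ (by positivity) (fact_pos n), one_mul, one_mul, sq]
  nlinarith [fact_one_le n, fact_pos n]

lemma hvC1 (n : ℕ) : |vC1 n| ≤ 1 / n.factorial := by
  rw [vC1, abs_of_nonneg (by positivity)]
  rw [div_le_div_iff₀ (by positivity) (fact_pos n), one_mul, one_mul]
  nlinarith [fact_one_le (n+1), fact_pos n]

lemma hvCp (n : ℕ) : |vCp n| ≤ 1 / n.factorial := by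
  rw [vCp, abs_of_nonneg (by positivity)]
  rw [div_le_div_iff₀ (by positivity) (fact_pos n), sq, one_mul]
  have h1 : (n : ℝ) ≤ n.factorial := by exact_mod_cast n.self_le_factorial
  nlinarith [fact_pos n]

lemma fact_succ_cast (n : ℕ) : (((n+1).factorial : ℕ) : ℝ) = ((n:ℝ)+1) * (n.factorial : ℝ) := by
  rw [Nat.factorial_succ]; push_cast; ring

lemma Lf (y : ℝ) : HasDerivAt (fun z : ℝ => ∑' n : ℕ, vC0 n * z ^ n)
    (∑' n : ℕ, vC1 n * y ^ n) y := by
  have h := aux_hasDerivAt vC0 hvC0 y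
  have e : (∑' n : ℕ, ((n : ℝ) + 1) * vC0 (n + 1) * y ^ n) = ∑' n : ℕ, vC1 n * y ^ n := by
    apply tsum_congr
    intro n
    simp only [vC0, vC1, fact_succ_cast]
    have := fact_pos n
    field_simp
  rw [e] at h
  exact h

lemma LF1 (y : ℝ) : HasDerivAt (fun z : ℝ => ∑' n : ℕ, vC1 n * z ^ n)
    (∑' n : ℕ, ((n : ℝ) + 1) * vC1 (n + 1) * y ^ n) y :=
  aux_hasDerivAt vC1 hvC1 y

lemma Lg (y : ℝ) : HasDerivAt (fun z : ℝ => z * ∑' n : ℕ, vC1 n * z ^ n)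
    (∑' n : ℕ, vC0 n * y ^ n) y := by
  have key : (fun z : ℝ => z * ∑' n : ℕ, vC1 n * z ^ n)
      = fun z : ℝ => ∑' n : ℕ, vCp n * z ^ n := by
    funext z
    rw [← tsum_mul_left, Summable.tsum_eq_zero_add (aux_summable vCp hvCp z)]
    have h0 : vCp 0 * z ^ 0 = 0 := by simp [vCp]
    rw [h0, zero_add]
    apply tsum_congr
    intro n
    simp only [vCp, vC1, fact_succ_cast]
    have := fact_pos n
    push_cast
    field_simp
    ring
  rw [key]
  have h := aux_hasDerivAt vCp hvCp y
  have e : (∑' n : ℕ, ((n : ℝ) + 1) * vCp (n + 1) * y ^ n) = ∑' n : ℕ, vC0 n * y ^ n := by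
    apply tsum_congr
    intro n
    simp only [vCp, vC0, fact_succ_cast]
    have := fact_pos n
    push_cast
    field_simp
  rw [e] at h
  exact h

lemma tsum_zero_coeff (C : ℕ → ℝ) : ∑' n : ℕ, C n * (0:ℝ) ^ n = C 0 := by
  rw [tsum_eq_single 0]
  · simp
  · intro n hn; simp [zero_pow hn]



noncomputable def FF (y : ℝ) : ℝ := ∑' n : ℕ, vC0 n * y ^ n
noncomputable def FF1 (y : ℝ) : ℝ := ∑' n : ℕ, vC1 n * y ^ n


lemma LfF (y : ℝ) : HasDerivAt FF (FF1 y) y := Lf y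

lemma FFcont : Continuous FF :=
  Differentiable.continuous (fun y => (LfF y).differentiableAt)

lemma FF1cont : Continuous FF1 :=
  Differentiable.continuous (fun y : ℝ => (LF1 y).differentiableAt)

lemma FF_zero : FF 0 = 1 := by
  rw [FF, tsum_zero_coeff]; simp [vC0]

lemma FF1_zero : FF1 0 = 1 := by
  rw [FF1, tsum_zero_coeff]; simp [vC1]

lemma LgW (w v : ℝ) : HasDerivAt (fun z : ℝ => z * FF1 (w * z)) (FF (w * v)) v := by
  rcases eq_or_ne w 0 with rfl | hw
  · simp only [zero_mul, FF_zero, FF1_zero]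
    simpa using (hasDerivAt_id v).mul_const (1:ℝ)
  · have h1 : HasDerivAt (fun u : ℝ => w * u) w v := by
      simpa using (hasDerivAt_id v).const_mul w
    have h2 := (Lg (w * v)).comp v h1
    have h3 := h2.const_mul w⁻¹
    have hfun : (fun u : ℝ => w⁻¹ * ((fun z : ℝ => z * ∑' n : ℕ, vC1 n * z ^ n) ∘
        fun u : ℝ => w * u) u) = fun u : ℝ => u * FF1 (w * u) := by
      funext u
      simp only [Function.comp, FF1]
      field_simp
    rw [hfun] at h3
    have : w⁻¹ * ((∑' n : ℕ, vC0 n * (w * v) ^ n) * w) = FF (w * v) := by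
      rw [FF]; field_simp
    rwa [this] at h3

/-- With `f(y) = ∑_{n≥0} yⁿ/(n!)²`, and `g`, `h` continuous on `[0,T]`, `[0,X]`,
the function `m(t,x) = c·f((∫₀ᵗ g)·(∫₀ˣ h))` solves the two-parameter linear Volterra integral
equation `m(t,x) = c + ∫₀ᵗ ∫₀ˣ g(s) h(a) m(s,a) da ds` on `[0,T] × [0,X]`. -/
theorem volterra_product_solution (T X : ℝ) (hT : 0 < T) (hX : 0 < X)
    (g h : ℝ → ℝ) (hg : ContinuousOn g (Icc 0 T)) (hh : ContinuousOn h (Icc 0 X))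
    (c : ℝ) (f : ℝ → ℝ)
    (hf : ∀ y : ℝ, f y = ∑' n : ℕ, y ^ n / (Nat.factorial n : ℝ) ^ 2)
    (m : ℝ → ℝ → ℝ)
    (hm : ∀ t x : ℝ, m t x = c * f ((∫ s in (0 : ℝ)..t, g s) * ∫ a in (0 : ℝ)..x, h a)) :
    ∀ t ∈ Icc (0 : ℝ) T, ∀ x ∈ Icc (0 : ℝ) X,
      m t x = c + ∫ s in (0 : ℝ)..t, ∫ a in (0 : ℝ)..x, g s * h a * m s a := by
  intro t ht x hx
  -- f in terms of FF
  have hfF : ∀ y : ℝ, f y = FF y := by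
    intro y
    rw [hf, FF]
    exact tsum_congr fun n => by rw [vC0]; ring
  -- continuous extensions of g and h
  set gE : ℝ → ℝ := fun u => g (max 0 (min u T)) with hgEdef
  set hE : ℝ → ℝ := fun u => h (max 0 (min u X)) with hhEdef
  have hclampT : Continuous fun u : ℝ => max 0 (min u T) :=
    continuous_const.max (continuous_id.min continuous_const)
  have hclampX : Continuous fun u : ℝ => max 0 (min u X) :=
    continuous_const.max (continuous_id.min continuous_const)
  have hmemT : ∀ u : ℝ, max 0 (min u T) ∈ Icc (0:ℝ) T :=
    fun u => ⟨le_max_left _ _, max_le hT.le (min_le_right _ _)⟩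
  have hmemX : ∀ u : ℝ, max 0 (min u X) ∈ Icc (0:ℝ) X :=
    fun u => ⟨le_max_left _ _, max_le hX.le (min_le_right _ _)⟩
  have hgEc : Continuous gE := hg.comp_continuous hclampT hmemT
  have hhEc : Continuous hE := hh.comp_continuous hclampX hmemX
  have hgEeq : ∀ u ∈ Icc (0:ℝ) T, gE u = g u := by
    intro u hu
    simp only [hgEdef]
    rw [min_eq_left hu.2, max_eq_right hu.1]
  have hhEeq : ∀ u ∈ Icc (0:ℝ) X, hE u = h u := by
    intro u hu
    simp only [hhEdef]
    rw [min_eq_left hu.2, max_eq_right hu.1]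
  -- primitives
  set G : ℝ → ℝ := fun u => ∫ s in (0:ℝ)..u, gE s with hGdef
  set H : ℝ → ℝ := fun u => ∫ a in (0:ℝ)..u, hE a with hHdef
  have hG : ∀ u, HasDerivAt G (gE u) u :=
    fun u => (hgEc.integral_hasStrictDerivAt 0 u).hasDerivAt
  have hH : ∀ u, HasDerivAt H (hE u) u :=
    fun u => (hhEc.integral_hasStrictDerivAt 0 u).hasDerivAt
  have hGcont : Continuous G := Differentiable.continuous fun u => (hG u).differentiableAt
  have hHcont : Continuous H := Differentiable.continuous fun u => (hH u).differentiableAt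
  have hG0 : G 0 = 0 := intervalIntegral.integral_same
  have hH0 : H 0 = 0 := intervalIntegral.integral_same
  have hGt : ∀ u ∈ Icc (0:ℝ) T, (∫ s in (0:ℝ)..u, g s) = G u := by
    intro u hu
    apply intervalIntegral.integral_congr
    intro z hz
    rw [uIcc_of_le hu.1] at hz
    exact (hgEeq z ⟨hz.1, hz.2.trans hu.2⟩).symm
  have hHx : ∀ u ∈ Icc (0:ℝ) X, (∫ a in (0:ℝ)..u, h a) = H u := by
    intro u hu
    apply intervalIntegral.integral_congr
    intro z hz
    rw [uIcc_of_le hu.1] at hz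
    exact (hhEeq z ⟨hz.1, hz.2.trans hu.2⟩).symm
  have hmF : ∀ s ∈ Icc (0:ℝ) T, ∀ a ∈ Icc (0:ℝ) X, m s a = c * FF (G s * H a) := by
    intro s hs a ha
    rw [hm, hfF, hGt s hs, hHx a ha]
  -- inner FTC
  have inner : ∀ (w x' : ℝ), (∫ a in (0:ℝ)..x', FF (w * H a) * hE a)
      = H x' * FF1 (w * H x') := by
    intro w x'
    have key : ∀ z : ℝ, HasDerivAt (fun u => H u * FF1 (w * H u)) (FF (w * H z) * hE z) z := by
      intro z
      have h1 := (LgW w (H z)).comp z (hH z)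
      simpa [Function.comp_def] using h1
    rw [intervalIntegral.integral_eq_sub_of_hasDerivAt (fun z _ => key z)
      (((FFcont.comp (continuous_const.mul hHcont)).mul hhEc).intervalIntegrable 0 x')]
    simp [hH0]
  -- outer FTC
  have outer : ∀ (v t' : ℝ), (∫ s in (0:ℝ)..t', FF1 (G s * v) * v * gE s)
      = FF (G t' * v) - 1 := by
    intro v t'
    have key : ∀ z : ℝ, HasDerivAt (fun u => FF (G u * v)) (FF1 (G z * v) * v * gE z) z := by
      intro z
      have h1 : HasDerivAt (fun u => G u * v) (gE z * v) z := (hG z).mul_const v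
      have h2 := (LfF (G z * v)).comp z h1
      have : FF1 (G z * v) * (gE z * v) = FF1 (G z * v) * v * gE z := by ring
      rw [this] at h2
      simpa [Function.comp_def] using h2
    have cont : Continuous fun z => FF1 (G z * v) * v * gE z :=
      ((FF1cont.comp (hGcont.mul continuous_const)).mul continuous_const).mul hgEc
    rw [intervalIntegral.integral_eq_sub_of_hasDerivAt (fun z _ => key z)
      (cont.intervalIntegrable 0 t')]
    rw [hG0, zero_mul, FF_zero]
  -- assemble
  have e1 : ∀ s ∈ Icc (0:ℝ) T, (∫ a in (0:ℝ)..x, g s * h a * m s a)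
      = (g s * c) * (H x * FF1 (G s * H x)) := by
    intro s hs
    have e : ∫ a in (0:ℝ)..x, g s * h a * m s a
        = ∫ a in (0:ℝ)..x, (g s * c) * (FF (G s * H a) * hE a) := by
      apply intervalIntegral.integral_congr
      intro a ha
      rw [uIcc_of_le hx.1] at ha
      have haX : a ∈ Icc (0:ℝ) X := ⟨ha.1, ha.2.trans hx.2⟩
      dsimp only
      rw [hmF s hs a haX, ← hhEeq a haX]
      ring
    rw [e, intervalIntegral.integral_const_mul, inner (G s) x]
  have e2 : (∫ s in (0:ℝ)..t, ∫ a in (0:ℝ)..x, g s * h a * m s a)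
      = ∫ s in (0:ℝ)..t, c * (FF1 (G s * H x) * H x * gE s) := by
    apply intervalIntegral.integral_congr
    intro s hs
    rw [uIcc_of_le ht.1] at hs
    have hsT : s ∈ Icc (0:ℝ) T := ⟨hs.1, hs.2.trans ht.2⟩
    dsimp only
    rw [e1 s hsT, ← hgEeq s hsT]
    ring
  rw [hmF t ht x hx, e2, intervalIntegral.integral_const_mul, outer (H x) t]
  ring
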